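/- arXiv:1808.01193 — 3 statements merged into one kernel-verified Lean document; each statement's English description precedes it below -/
import Mathlib

section
/- If x_1 < x_2 < \cdots < x_n are the zeros of the Stieltjes–Wigert polynomial S_n, then x_j x_{n+1-j} = q^{-2n-1} for every j = 1, \ldots, n. -/
/-- q-Pochhammer symbol (a;q)_m. -/
noncomputable def qPoch (q a : ℝ) (m : ℕ) : ℝ := ∏ j ∈ Finset.range m, (1 - a * q ^ j)

/-- Gaussian (q-)binomial coefficient. -/
noncomputable def qbinom (q : ℝ) (n k : ℕ) : ℝ :=
  qPoch q q n / (qPoch q q k * qPoch q q (n - k))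

/-- Monic Stieltjes–Wigert polynomial. -/
noncomputable def SW (q : ℝ) (n : ℕ) (x : ℝ) : ℝ :=
  (-1) ^ n * q ^ (-(n : ℝ) ^ 2 - n / 2) *
    ∑ k ∈ Finset.range (n + 1), qbinom q n k * q ^ ((k : ℝ) ^ 2 + k / 2) * (-x) ^ k

/-!
The substitution `y ↦ q^{-2n-1} / y` reverses the coefficient list of `S_n` up to the factor
`q^{-n²-n/2} y^{-n}` (the exponents `k² + k/2` and `(n-k)² + (n-k)/2 - (2n+1)(n-k)` differ by
`-n² - n/2`, and the `q`-binomial coefficients are symmetric), so it maps the zero set of `S_n`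
into itself. All coefficients of `S_n(-y)` are positive, so the zeros are positive and the map is
strictly decreasing on them; an order-reversing self-map of `{x_1 < ⋯ < x_n}` sends `x_j` to
`x_{n+1-j}`.
-/

open Finset Set

theorem StrictMono.apply_eq_apply_rev_of_strictAntiOn {α : Type*} [LinearOrder α] {n : ℕ}
    {x : Fin n → α} (hx : StrictMono x) {g : α → α} (hg : StrictAntiOn g (range x))
    (hmaps : ∀ i, g (x i) ∈ range x) (i : Fin n) : g (x i) = x i.rev := by
  choose φ hφ using hmaps
  have hφ_anti : StrictAnti φ := fun a b hab =>
    hx.lt_iff_lt.mp <| by rw [hφ, hφ]; exact hg (mem_range_self a) (mem_range_self b) (hx hab)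
  have hrev : (φ i).rev = i := (Fin.rev_strictAnti.comp hφ_anti).apply_eq
  rw [← hφ, ← Fin.rev_rev (φ i), hrev]

section StieltjesWigert

variable {q : ℝ}

lemma qPoch_pos (hq0 : 0 < q) (hq1 : q < 1) (m : ℕ) : 0 < qPoch q q m :=
  prod_pos fun j _ => by
    have : q * q ^ j < 1 :=
      mul_lt_one_of_nonneg_of_lt_one_left hq0.le hq1 (pow_le_one₀ hq0.le hq1.le)
    linarith

lemma qbinom_pos (hq0 : 0 < q) (hq1 : q < 1) (n k : ℕ) : 0 < qbinom q n k :=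
  div_pos (qPoch_pos hq0 hq1 n) (mul_pos (qPoch_pos hq0 hq1 k) (qPoch_pos hq0 hq1 (n - k)))

lemma qbinom_sub {n k : ℕ} (hk : k ≤ n) : qbinom q n (n - k) = qbinom q n k := by
  rw [qbinom, qbinom, Nat.sub_sub_self hk, mul_comm]

noncomputable def swTerm (q : ℝ) (n k : ℕ) (y : ℝ) : ℝ :=
  qbinom q n k * q ^ ((k : ℝ) ^ 2 + k / 2) * (-y) ^ k

lemma SW_eq_sum_swTerm (n : ℕ) (y : ℝ) :
    SW q n y = (-1) ^ n * q ^ (-(n : ℝ) ^ 2 - n / 2) * ∑ k ∈ range (n + 1), swTerm q n k y :=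
  rfl

lemma swTerm_reflect (hq0 : 0 < q) {n k : ℕ} (hk : k ≤ n) {y : ℝ} (hy : y ≠ 0) :
    y ^ n * swTerm q n (n - k) (q ^ (-(2 * (n : ℝ) + 1)) / y)
      = (-1) ^ n * q ^ (-(n : ℝ) ^ 2 - n / 2) * swTerm q n k y := by
  have hexp : q ^ (((n - k : ℕ) : ℝ) ^ 2 + (n - k : ℕ) / 2) *
      (q ^ (-(2 * (n : ℝ) + 1))) ^ (n - k)
        = q ^ (-(n : ℝ) ^ 2 - n / 2) * q ^ ((k : ℝ) ^ 2 + k / 2) := by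
    rw [← Real.rpow_mul_natCast hq0.le, ← Real.rpow_add hq0, ← Real.rpow_add hq0,
      Nat.cast_sub hk]
    ring_nf
  rw [swTerm, swTerm, qbinom_sub hk]
  obtain ⟨m, rfl⟩ := Nat.exists_eq_add_of_le hk
  have hsign : ((-1 : ℝ) ^ k) ^ 2 = 1 := by rw [← pow_mul, pow_mul', neg_one_sq, one_pow]
  rw [Nat.add_sub_cancel_left] at hexp ⊢
  set c := q ^ (-(2 * ((k + m : ℕ) : ℝ) + 1))
  have hcancel : y ^ m * (c ^ m / y ^ m) = c ^ m := mul_div_cancel₀ _ (pow_ne_zero m hy)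
  rw [neg_pow, div_pow, neg_pow y, pow_add, pow_add]
  linear_combination (qbinom q (k + m) k * (-1) ^ m * y ^ k) *
    (q ^ ((m : ℝ) ^ 2 + m / 2) * hcancel + hexp -
      q ^ (-((k + m : ℕ) : ℝ) ^ 2 - (k + m : ℕ) / 2) * q ^ ((k : ℝ) ^ 2 + k / 2) * hsign)

lemma swTerm_nonneg_of_nonpos (hq0 : 0 < q) (hq1 : q < 1) (n k : ℕ) {y : ℝ} (hy : y ≤ 0) :
    0 ≤ swTerm q n k y :=
  mul_nonneg (mul_nonneg (qbinom_pos hq0 hq1 n k).le (Real.rpow_nonneg hq0.le _))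
    (pow_nonneg (neg_nonneg.mpr hy) k)

lemma swTerm_zero_pos (hq0 : 0 < q) (hq1 : q < 1) (n : ℕ) (y : ℝ) : 0 < swTerm q n 0 y := by
  simpa [swTerm] using qbinom_pos hq0 hq1 n 0

lemma SW_ne_zero_of_nonpos (hq0 : 0 < q) (hq1 : q < 1) (n : ℕ) {y : ℝ} (hy : y ≤ 0) :
    SW q n y ≠ 0 := by
  have hsum : 0 < ∑ k ∈ range (n + 1), swTerm q n k y :=
    sum_pos' (fun k _ => swTerm_nonneg_of_nonpos hq0 hq1 n k hy)
      ⟨0, mem_range.mpr n.succ_pos, swTerm_zero_pos hq0 hq1 n y⟩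
  rw [SW_eq_sum_swTerm]
  exact mul_ne_zero (by positivity) hsum.ne'

lemma SW_reflect (hq0 : 0 < q) (n : ℕ) {y : ℝ} (hy : y ≠ 0) :
    y ^ n * SW q n (q ^ (-(2 * (n : ℝ) + 1)) / y)
      = (-1) ^ n * q ^ (-(n : ℝ) ^ 2 - n / 2) * SW q n y := by
  have hsum : y ^ n * ∑ k ∈ range (n + 1), swTerm q n k (q ^ (-(2 * (n : ℝ) + 1)) / y)
      = (-1) ^ n * q ^ (-(n : ℝ) ^ 2 - n / 2) * ∑ k ∈ range (n + 1), swTerm q n k y := by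
    rw [mul_sum, mul_sum, ← sum_range_reflect]
    refine sum_congr rfl fun k hk => ?_
    rw [Nat.add_sub_cancel]
    exact swTerm_reflect hq0 (Nat.lt_succ_iff.mp (mem_range.mp hk)) hy
  rw [SW_eq_sum_swTerm, SW_eq_sum_swTerm, mul_left_comm, hsum]

lemma SW_reflect_eq_zero (hq0 : 0 < q) {n : ℕ} {y : ℝ} (hy : y ≠ 0) (h : SW q n y = 0) :
    SW q n (q ^ (-(2 * (n : ℝ) + 1)) / y) = 0 := by
  have hrefl := SW_reflect hq0 n hy
  rw [h, mul_zero] at hrefl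
  exact (mul_eq_zero.mp hrefl).resolve_left (pow_ne_zero n hy)

end StieltjesWigert

/-- If x_1 < ⋯ < x_n are the zeros of S_n, then x_j x_{n+1-j} = q^{-2n-1}. -/
theorem stmt1 (q : ℝ) (hq0 : 0 < q) (hq1 : q < 1) (n : ℕ) (x : Fin n → ℝ)
    (hmono : StrictMono x) (hzero : ∀ j, SW q n (x j) = 0)
    (hall : ∀ y : ℝ, SW q n y = 0 → ∃ j, y = x j) :
    ∀ j : Fin n, x j * x j.rev = q ^ (-(2 * (n : ℝ) + 1)) := by
  intro j
  have hpos : ∀ i, 0 < x i := fun i =>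
    lt_of_not_ge fun h => SW_ne_zero_of_nonpos hq0 hq1 n h (hzero i)
  have hanti : StrictAntiOn (fun y => q ^ (-(2 * (n : ℝ) + 1)) / y) (range x) := by
    rintro _ ⟨a, rfl⟩ _ ⟨b, rfl⟩ hab
    exact div_lt_div_of_pos_left (Real.rpow_pos_of_pos hq0 _) (hpos a) hab
  have hmaps : ∀ i, q ^ (-(2 * (n : ℝ) + 1)) / x i ∈ range x := fun i =>
    let ⟨k, hk⟩ := hall _ (SW_reflect_eq_zero hq0 (hpos i).ne' (hzero i))
    ⟨k, hk.symm⟩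
  rw [← hmono.apply_eq_apply_rev_of_strictAntiOn hanti hmaps j]
  field_simp [(hpos j).ne']
end

section
/- For the L×L matrix V with entries V_{ij} = \prod_{l=j+1}^{L-1} (1 - q^{N - k_i + l}) for 0 \le i,j \le L-1 (empty product equal to 1 when j = L-1), one has det(V) = q^{NL(L-1)/2 + L(L-1)(2L-1)/6} \prod_{0 \le i < j \le L-1} (q^{-k_j} - q^{-k_i}). -/
/-! With `x i = q ^ (-k i)`, the entry `(i, j)` is `P j (x i)` for the polynomial
`P j = ∏_{j < l < L} (1 - q ^ (N + l) X)` of degree `L - 1 - j`. Reversing both rows and columns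
makes these degrees triangular, so `det V` is the product of the top coefficients
`∏_{j < l} (-q ^ (N + l))` times a Vandermonde determinant in the reversed nodes. Each sign `-1`
pairs with one Vandermonde factor `x i - x l`, and the powers of `q` add up to
`∑_l l (N + l) = N L (L - 1) / 2 + L (L - 1) (2L - 1) / 6`. -/

open Finset Polynomial

theorem Finset.prod_filter_fst_lt_snd_eq_prod_Ioi {α M : Type*} [CommMonoid M] [LinearOrder α]
    [Fintype α] [LocallyFiniteOrderTop α] (f : α → α → M) :
    ∏ p ∈ univ.filter (fun p : α × α => p.1 < p.2), f p.1 p.2 = ∏ i, ∏ j ∈ Ioi i, f i j := by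
  rw [prod_filter, Fintype.prod_prod_type]
  refine prod_congr rfl fun i _ => ?_
  rw [← prod_filter]
  congr 1
  ext j
  simp

theorem Finset.prod_filter_fst_lt_snd_eq_prod_Iio {α M : Type*} [CommMonoid M] [LinearOrder α]
    [Fintype α] [LocallyFiniteOrderBot α] (f : α → α → M) :
    ∏ p ∈ univ.filter (fun p : α × α => p.1 < p.2), f p.1 p.2 = ∏ j, ∏ i ∈ Iio j, f i j := by
  rw [prod_filter, Fintype.prod_prod_type_right]
  refine prod_congr rfl fun j _ => ?_
  rw [← prod_filter]
  congr 1
  ext i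
  simp

theorem Fin.prod_filter_fst_lt_snd_rev {M : Type*} [CommMonoid M] {n : ℕ} (f : Fin n → Fin n → M) :
    ∏ p ∈ univ.filter (fun p : Fin n × Fin n => p.1 < p.2), f p.2.rev p.1.rev =
      ∏ p ∈ univ.filter (fun p : Fin n × Fin n => p.1 < p.2), f p.1 p.2 :=
  prod_nbij' (fun p => (p.2.rev, p.1.rev)) (fun p => (p.2.rev, p.1.rev))
    (by simp) (by simp) (by simp) (by simp) (by simp)

theorem Fin.prod_Ioi_eq_prod_Ico {M : Type*} [CommMonoid M] {n : ℕ} (j : Fin n) (g : ℕ → M) :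
    ∏ l ∈ Ioi j, g l = ∏ l ∈ Ico (j + 1 : ℕ) n, g l := by
  rw [Finset.Ico_add_one_left_eq_Ioo, ← Fin.map_valEmbedding_Ioi, prod_map]
  rfl

theorem Finset.sum_range_natCast_mul_add (L N : ℕ) :
    ∑ j ∈ range L, (j : ℝ) * (N + j) = N * L * (L - 1) / 2 + L * (L - 1) * (2 * L - 1) / 6 := by
  induction L with
  | zero => simp
  | succ L ih =>
    rw [sum_range_succ, ih]
    push_cast
    ring

theorem Fin.prod_filter_fst_lt_snd_pow_add_snd (q : ℝ) (L N : ℕ) :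
    ∏ p ∈ univ.filter (fun p : Fin L × Fin L => p.1 < p.2), q ^ (N + (p.2 : ℕ)) =
      q ^ ((N : ℝ) * L * (L - 1) / 2 + L * (L - 1) * (2 * L - 1) / 6) := by
  rw [prod_filter_fst_lt_snd_eq_prod_Iio fun _ b : Fin L => q ^ (N + (b : ℕ))]
  calc _ = ∏ j : Fin L, q ^ ((j : ℕ) * (N + j)) :=
        prod_congr rfl fun j _ => by rw [Finset.prod_const, Fin.card_Iio, ← pow_mul, mul_comm]
    _ = q ^ (∑ j : Fin L, (j : ℕ) * (N + j)) := prod_pow_eq_pow_sum _ _ _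
    _ = _ := by
        rw [← Real.rpow_natCast]
        push_cast
        rw [Fin.sum_univ_eq_sum_range (fun j => (j : ℝ) * (N + j)), sum_range_natCast_mul_add]

theorem Polynomial.natDegree_one_sub_C_mul_X_le {R : Type*} [CommRing R] (a : R) :
    (1 - C a * X).natDegree ≤ 1 := by
  compute_degree

theorem Polynomial.natDegree_prod_one_sub_C_mul_X_le {R ι : Type*} [CommRing R] (s : Finset ι)
    (a : ι → R) : (∏ l ∈ s, (1 - C (a l) * X)).natDegree ≤ #s := by
  refine (natDegree_prod_le _ _).trans ?_
  simpa using sum_le_card_nsmul s _ 1 fun l _ => natDegree_one_sub_C_mul_X_le (a l)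

theorem Polynomial.coeff_card_prod_one_sub_C_mul_X {R ι : Type*} [CommRing R] (s : Finset ι)
    (a : ι → R) : (∏ l ∈ s, (1 - C (a l) * X)).coeff #s = ∏ l ∈ s, -a l := by
  simpa [coeff_one] using
    coeff_prod_of_natDegree_le s _ 1 fun l _ => natDegree_one_sub_C_mul_X_le (a l)

theorem Matrix.det_eval_matrixOfPolynomials_eq_prod_coeff_mul_det_vandermonde
    {R : Type*} [CommRing R] {n : ℕ} (v : Fin n → R) (p : Fin n → R[X])
    (h_deg : ∀ j, (p j).natDegree ≤ j) :
    (Matrix.of fun i j => (p j).eval (v i)).det = (∏ j, (p j).coeff j) * (vandermonde v).det := by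
  rw [eval_matrixOfPolynomials_eq_vandermonde_mul_matrixOfPolynomials v p h_deg, det_mul,
    det_of_isUpperTriangular (matrixOfPolynomials_blockTriangular p h_deg), mul_comm]
  rfl

theorem Matrix.det_eval_matrixOfPolynomials_of_natDegree_le_rev
    {R : Type*} [CommRing R] {n : ℕ} (v : Fin n → R) (p : Fin n → R[X])
    (h_deg : ∀ j, (p j).natDegree ≤ j.rev) :
    (Matrix.of fun i j => (p j).eval (v i)).det =
      (∏ j, (p j).coeff j.rev) *
        ∏ q ∈ univ.filter (fun q : Fin n × Fin n => q.1 < q.2), (v q.1 - v q.2) := by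
  calc _ = ((Matrix.of fun i j => (p j).eval (v i)).submatrix Fin.revPerm Fin.revPerm).det :=
        (det_submatrix_equiv_self Fin.revPerm _).symm
    _ = (∏ j : Fin n, (p j.rev).coeff j) * (vandermonde fun i => v i.rev).det :=
        det_eval_matrixOfPolynomials_eq_prod_coeff_mul_det_vandermonde _ (p ∘ Fin.rev)
          fun j => by simpa using h_deg j.rev
    _ = _ := by
        rw [det_vandermonde, ← prod_filter_fst_lt_snd_eq_prod_Ioi,
          Fin.prod_filter_fst_lt_snd_rev fun a b => v a - v b,
          Fintype.prod_equiv Fin.revPerm _ (fun j => (p j).coeff j.rev) fun j => by simp]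

theorem stmt9_general (q : ℝ) (hq0 : 0 < q) (L N : ℕ) (k : Fin L → ℤ) :
    Matrix.det (fun i j : Fin L =>
        ∏ l ∈ Finset.Ico ((j : ℕ) + 1) L, (1 - q ^ ((N : ℤ) - k i + l))) =
      q ^ ((N : ℝ) * L * ((L : ℝ) - 1) / 2 + (L : ℝ) * ((L : ℝ) - 1) * (2 * (L : ℝ) - 1) / 6) *
        ∏ p ∈ Finset.univ.filter (fun p : Fin L × Fin L => p.1 < p.2),
          (q ^ (-(k p.2)) - q ^ (-(k p.1))) := by
  set x : Fin L → ℝ := fun i => q ^ (-(k i))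
  set P : Fin L → ℝ[X] := fun j => ∏ l ∈ Ioi j, (1 - C (q ^ (N + (l : ℕ))) * X)
  have hentry : (fun i j : Fin L => ∏ l ∈ Ico ((j : ℕ) + 1) L, (1 - q ^ ((N : ℤ) - k i + l))) =
      Matrix.of fun i j => (P j).eval (x i) := by
    ext i j
    simp only [P, x, Matrix.of_apply, eval_prod, eval_sub, eval_one, eval_mul, eval_C, eval_X,
      Fin.prod_Ioi_eq_prod_Ico j fun l => 1 - q ^ (N + l) * q ^ (-k i)]
    refine prod_congr rfl fun l _ => ?_
    rw [← zpow_natCast, ← zpow_add₀ hq0.ne']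
    congr 2
    push_cast
    ring
  have hcard : ∀ j : Fin L, #(Ioi j) = j.rev := fun j => by
    rw [Fin.card_Ioi, Fin.val_rev]
    omega
  rw [hentry, Matrix.det_eval_matrixOfPolynomials_of_natDegree_le_rev x P fun j => by
      simpa only [hcard] using natDegree_prod_one_sub_C_mul_X_le (Ioi j) _]
  simp only [P, ← hcard, coeff_card_prod_one_sub_C_mul_X]
  rw [← prod_filter_fst_lt_snd_eq_prod_Ioi fun _ b : Fin L => -q ^ (N + (b : ℕ)),
    ← prod_mul_distrib, ← Fin.prod_filter_fst_lt_snd_pow_add_snd, ← prod_mul_distrib]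
  exact prod_congr rfl fun p _ => by ring

theorem stmt9 (q : ℝ) (hq0 : 0 < q) (hq1 : q < 1) (L N : ℕ) (hL : 0 < L) (hN : 0 < N)
    (k : Fin L → ℤ) :
    Matrix.det (fun i j : Fin L =>
        ∏ l ∈ Finset.Ico ((j : ℕ) + 1) L, (1 - q ^ ((N : ℤ) - k i + l))) =
      q ^ ((N : ℝ) * L * ((L : ℝ) - 1) / 2 + (L : ℝ) * ((L : ℝ) - 1) * (2 * (L : ℝ) - 1) / 6) *
        ∏ p ∈ Finset.univ.filter (fun p : Fin L × Fin L => p.1 < p.2),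
          (q ^ (-(k p.2)) - q ^ (-(k p.1))) :=
  stmt9_general q hq0 L N k
end

section
/- Suppose f_n(k) is uniformly bounded for n\ge0, 0\le k\le n, and a_k is a bounded sequence with sup_{0\le k\le n\delta} |f_n(k) - a_k| \le \varepsilon(n,\delta) \to 0 as n\to\infty for some \delta\in(0,1). Let P_n(x) = \sum_{k=0}^n q^{k^2} f_n(k)(-x)^k and \Phi(z) = \sum_{k=0}^\infty a_k q^{k^2} z^k, and d = \lfloor n\delta \rfloor. Then uniformly for |y| \le M and t \ge 0, P_n(q^{nt} y) = \Phi(-q^{nt} y) + O(\varepsilon(n,\delta)) + O(q^{d^2} M^d). -/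
open Filter Finset

/-! Put `g k = q ^ (k ^ 2) * M ^ k`. Since `|q ^ (n t) y| ≤ M`, the `k`-th terms of both series are
bounded coefficients times `g k`, and `∑ g` converges. For `k ≤ d` the coefficients differ by at
most `ε n`; beyond `d` only their boundedness is used, and because `(d + k)² ≥ d² + k²` the tail
`∑_{k > d} g k` is at most `g d * ∑ g`. -/

theorem summable_pow_sq_mul_pow {q : ℝ} (hq : |q| < 1) (M : ℝ) :
    Summable fun k : ℕ => q ^ (k ^ 2) * M ^ k := by
  have hlim : Tendsto (fun k : ℕ => q ^ k * M) atTop (nhds 0) := by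
    simpa using (tendsto_pow_atTop_nhds_zero_of_abs_lt_one hq).mul_const M
  have hsmall : ∀ᶠ k : ℕ in atTop, ‖q ^ k * M‖ ≤ 1 / 2 :=
    hlim.norm.eventually (ge_mem_nhds (show ‖(0 : ℝ)‖ < 1 / 2 by norm_num))
  refine .of_norm_bounded_eventually_nat summable_geometric_two ?_
  filter_upwards [hsmall] with k hk
  -- the `k`-th term is `(q ^ k * M) ^ k`, and `q ^ k * M → 0`
  rw [sq, pow_mul, ← mul_pow, norm_pow]
  exact pow_le_pow_left₀ (norm_nonneg _) hk k

theorem pow_sq_mul_pow_add_le {q M : ℝ} (hq0 : 0 ≤ q) (hq1 : q ≤ 1) (hM : 0 ≤ M) (m k : ℕ) :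
    q ^ ((m + k) ^ 2) * M ^ (m + k) ≤ (q ^ (m ^ 2) * M ^ m) * (q ^ (k ^ 2) * M ^ k) := by
  have hexp : q ^ ((m + k) ^ 2) ≤ q ^ (m ^ 2) * q ^ (k ^ 2) := by
    rw [← pow_add]
    exact pow_le_pow_of_le_one hq0 hq1 (by nlinarith [Nat.zero_le (m * k)])
  calc q ^ ((m + k) ^ 2) * M ^ (m + k) ≤ q ^ (m ^ 2) * q ^ (k ^ 2) * M ^ (m + k) := by gcongr
    _ = _ := by ring

theorem tsum_pow_sq_mul_pow_nat_add_le {q M : ℝ} (hq0 : 0 ≤ q) (hq1 : q < 1) (hM : 0 ≤ M)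
    (d : ℕ) :
    ∑' j : ℕ, q ^ ((j + (d + 1)) ^ 2) * M ^ (j + (d + 1)) ≤
      q ^ (d ^ 2) * M ^ d * ∑' k : ℕ, q ^ (k ^ 2) * M ^ k := by
  set g : ℕ → ℝ := fun k => q ^ (k ^ 2) * M ^ k
  have hg : Summable g := summable_pow_sq_mul_pow (by rwa [abs_of_nonneg hq0]) M
  have hg0 : ∀ k, 0 ≤ g k := fun k => by positivity
  have hshift : ∑' j, g (j + 1) ≤ ∑' k, g k := by
    rw [← hg.sum_add_tsum_nat_add 1]
    simpa using hg0 0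
  calc ∑' j, g (j + (d + 1)) ≤ ∑' j, g d * g (j + 1) := by
        refine ((summable_nat_add_iff _).2 hg).tsum_le_tsum (fun j => ?_)
          (((summable_nat_add_iff 1).2 hg).mul_left _)
        simpa only [g, ← add_assoc, add_comm j d] using
          pow_sq_mul_pow_add_le hq0 hq1.le hM d (j + 1)
    _ = g d * ∑' j, g (j + 1) := tsum_mul_left
    _ ≤ g d * ∑' k, g k := mul_le_mul_of_nonneg_left hshift (hg0 d)

theorem norm_tsum_le_of_norm_le_split {E : Type*} [NormedAddCommGroup E] [CompleteSpace E]
    {u : ℕ → E} {g : ℕ → ℝ} (hg : Summable g) (d : ℕ) {e c : ℝ}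
    (hlow : ∀ k ≤ d, ‖u k‖ ≤ e * g k) (hhigh : ∀ k, d < k → ‖u k‖ ≤ c * g k) :
    ‖∑' k, u k‖ ≤ e * ∑ k ∈ range (d + 1), g k + c * ∑' j, g (j + (d + 1)) := by
  have htail : ∀ j, ‖u (j + (d + 1))‖ ≤ c * g (j + (d + 1)) := fun j => hhigh _ (by omega)
  have hu : Summable u :=
    (summable_nat_add_iff (d + 1)).1 <|
      .of_norm_bounded (((summable_nat_add_iff (d + 1)).2 hg).mul_left c) htail
  rw [← hu.sum_add_tsum_nat_add (d + 1), mul_sum, ← tsum_mul_left]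
  refine (norm_add_le _ _).trans (add_le_add ?_ ?_)
  · exact norm_sum_le_of_le _ fun k hk => hlow k (Nat.lt_succ_iff.1 (mem_range.1 hk))
  · exact tsum_of_norm_bounded ((((summable_nat_add_iff (d + 1)).2 hg).mul_left c).hasSum) htail

theorem summable_mul_pow_sq_mul_pow {q c : ℝ} (hq : |q| < 1) (z : ℝ) {w : ℕ → ℝ}
    (hw : ∀ k, |w k| ≤ c) : Summable fun k => w k * (q ^ (k ^ 2) * z ^ k) := by
  refine .of_norm_bounded ((summable_pow_sq_mul_pow (q := |q|) (by rwa [abs_abs]) |z|).mul_left c)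
    fun k => ?_
  rw [Real.norm_eq_abs, abs_mul, abs_mul, abs_pow, abs_pow]
  exact mul_le_mul_of_nonneg_right (hw k) (by positivity)

theorem abs_tsum_mul_pow_sq_mul_pow_le {q M z e c : ℝ} (hq0 : 0 ≤ q) (hq1 : q < 1)
    (hz : |z| ≤ M) {w : ℕ → ℝ} (d : ℕ) (hlow : ∀ k ≤ d, |w k| ≤ e)
    (hhigh : ∀ k, d < k → |w k| ≤ c) :
    |∑' k, w k * (q ^ (k ^ 2) * z ^ k)| ≤
      (e + c * (q ^ (d ^ 2) * M ^ d)) * ∑' k : ℕ, q ^ (k ^ 2) * M ^ k := by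
  have hM : 0 ≤ M := (abs_nonneg z).trans hz
  set g : ℕ → ℝ := fun k => q ^ (k ^ 2) * M ^ k
  have hg : Summable g := summable_pow_sq_mul_pow (by rwa [abs_of_nonneg hq0]) M
  have he : 0 ≤ e := (abs_nonneg _).trans (hlow 0 d.zero_le)
  have hc : 0 ≤ c := (abs_nonneg _).trans (hhigh (d + 1) d.lt_succ_self)
  have hterm : ∀ {b} k, |w k| ≤ b → ‖w k * (q ^ (k ^ 2) * z ^ k)‖ ≤ b * g k := fun k hk => by
    rw [Real.norm_eq_abs, abs_mul, abs_mul, abs_of_nonneg (pow_nonneg hq0 (k ^ 2)), abs_pow]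
    exact mul_le_mul hk (mul_le_mul_of_nonneg_left (pow_le_pow_left₀ (abs_nonneg z) hz k)
      (pow_nonneg hq0 _)) (by positivity) ((abs_nonneg _).trans hk)
  have hpartial : ∑ k ∈ range (d + 1), g k ≤ ∑' k, g k :=
    hg.sum_le_tsum _ fun k _ => by positivity
  calc |∑' k, w k * (q ^ (k ^ 2) * z ^ k)|
      ≤ e * ∑ k ∈ range (d + 1), g k + c * ∑' j, g (j + (d + 1)) :=
        norm_tsum_le_of_norm_le_split hg d (fun k hk => hterm k (hlow k hk))
          (fun k hk => hterm k (hhigh k hk))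
    _ ≤ e * ∑' k, g k + c * (g d * ∑' k, g k) := by
        gcongr
        exact tsum_pow_sq_mul_pow_nat_add_le hq0 hq1 hM d
    _ = (e + c * g d) * ∑' k, g k := by ring

theorem abs_neg_rpow_mul_le {q s y M : ℝ} (hq0 : 0 < q) (hq1 : q ≤ 1) (hs : 0 ≤ s)
    (hy : |y| ≤ M) : |-(q ^ s * y)| ≤ M := by
  rw [abs_neg, abs_mul, abs_of_pos (Real.rpow_pos_of_pos hq0 _)]
  exact (mul_le_of_le_one_left (abs_nonneg y) (Real.rpow_le_one hq0.le hq1 hs)).trans hy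

theorem sum_range_sub_tsum_eq_tsum {q z : ℝ} (f a : ℕ → ℝ) (n : ℕ)
    (ha : Summable fun k => a k * (q ^ (k ^ 2) * z ^ k)) :
    ∑ k ∈ range (n + 1), q ^ (k ^ 2) * f k * z ^ k - ∑' k, a k * q ^ (k ^ 2) * z ^ k =
      ∑' k, ((if k ≤ n then f k else 0) - a k) * (q ^ (k ^ 2) * z ^ k) := by
  have hP : ∑ k ∈ range (n + 1), q ^ (k ^ 2) * f k * z ^ k =
      ∑' k, (if k ≤ n then f k else 0) * (q ^ (k ^ 2) * z ^ k) := by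
    rw [tsum_eq_sum (s := range (n + 1)) fun k hk => by simp_all]
    exact sum_congr rfl fun k hk => by
      rw [if_pos (Nat.lt_succ_iff.1 (mem_range.1 hk))]; ring
  have hfin : Summable fun k => (if k ≤ n then f k else 0) * (q ^ (k ^ 2) * z ^ k) :=
    summable_of_ne_finset_zero (s := range (n + 1)) fun k hk => by simp_all
  have hΦ : ∑' k, a k * q ^ (k ^ 2) * z ^ k = ∑' k, a k * (q ^ (k ^ 2) * z ^ k) := by
    simp only [mul_assoc]
  rw [hP, hΦ, ← hfin.tsum_sub ha]
  simp only [sub_mul]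

theorem stmt14_general (q δ M : ℝ) (hq0 : 0 < q) (hq1 : q < 1) (hδ0 : 0 < δ) (hδ1 : δ < 1)
    (hM : 1 ≤ M)
    (f : ℕ → ℕ → ℝ) (B : ℝ) (hf : ∀ n k, k ≤ n → |f n k| ≤ B)
    (a : ℕ → ℝ) (A : ℝ) (ha : ∀ k, |a k| ≤ A)
    (ε : ℕ → ℝ)
    (hfa : ∀ (n k : ℕ), k ≤ n → (k : ℝ) ≤ n * δ → |f n k - a k| ≤ ε n) :
    ∃ C > 0, ∀ n : ℕ, ∀ y t : ℝ, |y| ≤ M → 0 ≤ t →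
      |(∑ k ∈ Finset.range (n + 1), q ^ (k ^ 2) * f n k * (-(q ^ ((n : ℝ) * t) * y)) ^ k) -
          ∑' k : ℕ, a k * q ^ (k ^ 2) * (-(q ^ ((n : ℝ) * t) * y)) ^ k| ≤
        C * (ε n + q ^ ((⌊(n : ℝ) * δ⌋₊) ^ 2) * M ^ (⌊(n : ℝ) * δ⌋₊)) := by
  have hq : |q| < 1 := by rwa [abs_of_pos hq0]
  have hB : 0 ≤ B := (abs_nonneg _).trans (hf 0 0 le_rfl)
  have hA : 0 ≤ A := (abs_nonneg _).trans (ha 0)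
  set S := ∑' k : ℕ, q ^ (k ^ 2) * M ^ k
  have hS : 1 ≤ S := by
    simpa using (summable_pow_sq_mul_pow hq M).le_tsum 0 fun k _ => by positivity
  refine ⟨(1 + B + A) * S, mul_pos (by linarith) (by linarith), fun n y t hy ht => ?_⟩
  set d := ⌊(n : ℝ) * δ⌋₊
  have hz := abs_neg_rpow_mul_le hq0 hq1.le (by positivity : 0 ≤ (n : ℝ) * t) hy
  have hε : 0 ≤ ε n :=
    (abs_nonneg _).trans (hfa n 0 n.zero_le (by rw [Nat.cast_zero]; positivity))
  have hdn : d ≤ n := Nat.floor_le_of_le (by nlinarith [(n.cast_nonneg : (0 : ℝ) ≤ n)])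
  set p : ℕ → ℝ := fun k => if k ≤ n then f n k else 0
  have hp : ∀ k, |p k| ≤ B := fun k => by
    by_cases hk : k ≤ n <;> simp [p, hk, hf, hB]
  have hlow : ∀ k ≤ d, |p k - a k| ≤ ε n := fun k hk => by
    simpa [p, hk.trans hdn] using
      hfa n k (hk.trans hdn) ((Nat.cast_le.2 hk).trans (Nat.floor_le (by positivity)))
  have hhigh : ∀ k, d < k → |p k - a k| ≤ B + A := fun k _ =>
    (abs_sub _ _).trans (add_le_add (hp k) (ha k))
  rw [sum_range_sub_tsum_eq_tsum _ _ n (summable_mul_pow_sq_mul_pow hq _ ha)]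
  refine (abs_tsum_mul_pow_sq_mul_pow_le hq0.le hq1 hz d hlow hhigh).trans ?_
  have hgd : 0 ≤ q ^ (d ^ 2) * M ^ d := by positivity
  calc _ ≤ (1 + B + A) * (ε n + q ^ (d ^ 2) * M ^ d) * S :=
        mul_le_mul_of_nonneg_right (by nlinarith [mul_nonneg (add_nonneg hB hA) hε]) (by linarith)
    _ = _ := by ring

/-- Outer asymptotics (j = 0 case): P_n(q^{nt} y) = Φ(-q^{nt} y) + O(ε(n,δ)) + O(q^{d²} M^d),
uniformly for |y| ≤ M and t ≥ 0. -/
theorem stmt14 (q δ M : ℝ) (hq0 : 0 < q) (hq1 : q < 1) (hδ0 : 0 < δ) (hδ1 : δ < 1)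
    (hM : 1 ≤ M)
    (f : ℕ → ℕ → ℝ) (B : ℝ) (hf : ∀ n k, k ≤ n → |f n k| ≤ B)
    (a : ℕ → ℝ) (A : ℝ) (ha : ∀ k, |a k| ≤ A)
    (ε : ℕ → ℝ) (hε : Tendsto ε atTop (nhds 0))
    (hfa : ∀ (n k : ℕ), k ≤ n → (k : ℝ) ≤ n * δ → |f n k - a k| ≤ ε n) :
    ∃ C > 0, ∀ n : ℕ, ∀ y t : ℝ, |y| ≤ M → 0 ≤ t →
      |(∑ k ∈ Finset.range (n + 1), q ^ (k ^ 2) * f n k * (-(q ^ ((n : ℝ) * t) * y)) ^ k) -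
          ∑' k : ℕ, a k * q ^ (k ^ 2) * (-(q ^ ((n : ℝ) * t) * y)) ^ k| ≤
        C * (ε n + q ^ ((⌊(n : ℝ) * δ⌋₊) ^ 2) * M ^ (⌊(n : ℝ) * δ⌋₊)) :=
  stmt14_general q δ M hq0 hq1 hδ0 hδ1 hM f B hf a A ha ε hfa
end
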